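/- arXiv:1511.05140 — 3 statements merged into one kernel-verified Lean document; each statement's English description precedes it below -/
import Mathlib

section
/- Let (ξ_i)_{i≥1} be i.i.d. with law μ. Fix an integer j ≥ 1 and reals a_1, …, a_j, and suppose the event E = { Σ_{i=1}^{k} ξ_i < a_k for all 1 ≤ k ≤ j } has positive probability. Then there exist, on a common probability space, random vectors (ξ̂_1, …, ξ̂_j) and (ζ_1, …, ζ_j) such that (ξ̂_1, …, ξ̂_j) has the conditional law of (ξ_1, …, ξ_j) given E, the (ζ_i) are i.i.d. with law μ, and ξ̂_i ≤ ζ_i almost surely for every 1 ≤ i ≤ j. (Spacings conditioned on the continuation of a wave are coordinatewise stochastically dominated by i.i.d.(μ) spacings.) -/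
open MeasureTheory ProbabilityTheory Filter

noncomputable section

/-- The parameters of the spatial queue model: a "comfort zone" `[cm, cp]` with `0 < cm < cp`,
and a probability measure `μ` on `[cm, cp]` with mean `1` and positive variance. -/
structure QueueParams where
  cm : ℝ
  cp : ℝ
  cm_pos : 0 < cm
  cm_lt_cp : cm < cp
  μ : Measure ℝ
  μ_prob : IsProbabilityMeasure μ
  μ_supp : μ (Set.Icc cm cp) = 1
  μ_mean : ∫ x, x ∂μ = 1
  μ_var_pos : 0 < ∫ x, (x - 1) ^ 2 ∂μ

/-- The standard deviation `σ` of `μ`. -/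
def QueueParams.sigma (Q : QueueParams) : ℝ := Real.sqrt (∫ x, (x - 1) ^ 2 ∂Q.μ)

/-- Membership in the state space `𝕏`: configurations `0 = x_0 < x_1 < ⋯` with successive
spacings in `[cm, cp]`. -/
def QueueParams.IsConfig (Q : QueueParams) (x : ℕ → ℝ) : Prop :=
  x 0 = 0 ∧ ∀ i : ℕ, x (i + 1) - x i ∈ Set.Icc Q.cm Q.cp

/-- `q(j,y)`: the probability that the symmetrized random walk
`S^{sym}_k = Σ_{i=1}^k (ξ'_i - ξ''_i)` (with `ξ', ξ''` independent i.i.d.(μ)) satisfies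
`max_{1 ≤ k ≤ j} S^{sym}_k ≤ y`. -/
def QueueParams.symWalkProb (Q : QueueParams) (j : ℕ) (y : ℝ) : ℝ :=
  haveI := Q.μ_prob
  ((Measure.pi fun _ : Fin j => Q.μ.prod Q.μ)
    {v : Fin j → ℝ × ℝ | ∀ k ∈ Finset.Icc 1 j,
      (∑ i ∈ Finset.univ.filter (fun i : Fin j => (i : ℕ) < k), ((v i).1 - (v i).2)) ≤ y}).toReal

/-- `q_{j,y}(x_1, …, x_j)`: the probability that
`max_{1 ≤ k ≤ j} Σ_{i=1}^k (ξ'_i - x_i) ≤ y`, where `(ξ'_i)` is i.i.d.(μ). -/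
def QueueParams.condWalkProb (Q : QueueParams) (j : ℕ) (y : ℝ) (x : ℕ → ℝ) : ℝ :=
  haveI := Q.μ_prob
  ((Measure.pi fun _ : Fin j => Q.μ)
    {v : Fin j → ℝ | ∀ k ∈ Finset.Icc 1 j,
      (∑ i ∈ Finset.univ.filter (fun i : Fin j => (i : ℕ) < k), v i)
        - (∑ i ∈ Finset.Icc 1 k, x i) ≤ y}).toReal

/-- A sequence `(x_1, …, x_j)` is `(j,y)`-good if `q_{j,y}(x_1,…,x_j) ≤ 2 q(j,y)`. -/
def QueueParams.IsGood (Q : QueueParams) (j : ℕ) (y : ℝ) (x : ℕ → ℝ) : Prop :=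
  Q.condWalkProb j y x ≤ 2 * Q.symWalkProb j y

/-- The spatial queue process with parameters `Q`, driven by an i.i.d.(μ) array
`(ξ i t)_{i ≥ 1, t ≥ 1}`, started from an arbitrary (deterministic) initial
configuration `x0 ∈ 𝕏`.  `X i t` is the position of the rank-`i` customer at time `t`,
defined by the recursion (1)–(3) of the paper: at step `t`, customer `i ≥ 1` moves to
`ξ_1(t) + ⋯ + ξ_i(t)` if `Σ_{m ≤ k} ξ_m(t) < X_{k+1}(t-1) - cp` for all `1 ≤ k ≤ i`
(i.e. `i < W(t)`), and otherwise stays at `X_{i+1}(t-1)`. -/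
structure QueueProcess (Q : QueueParams) (Ω : Type) [MeasurableSpace Ω] where
  P : Measure Ω
  P_prob : IsProbabilityMeasure P
  ξ : ℕ → ℕ → Ω → ℝ
  ξ_meas : ∀ i t, 1 ≤ i → 1 ≤ t → Measurable (ξ i t)
  ξ_range : ∀ i t ω, 1 ≤ i → 1 ≤ t → ξ i t ω ∈ Set.Icc Q.cm Q.cp
  ξ_law : ∀ i t, 1 ≤ i → 1 ≤ t → P.map (ξ i t) = Q.μ
  ξ_indep : iIndepFun (m := fun _ : ℕ × ℕ => (inferInstance : MeasurableSpace ℝ))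
    (fun p : ℕ × ℕ => ξ (p.1 + 1) (p.2 + 1)) P
  X : ℕ → ℕ → Ω → ℝ
  X_meas : ∀ i t, Measurable (X i t)
  x0 : ℕ → ℝ
  x0_config : Q.IsConfig x0
  X_init : ∀ i ω, X i 0 ω = x0 i
  X_zero : ∀ t ω, X 0 t ω = 0
  X_move : ∀ t ω i, 1 ≤ t → 1 ≤ i →
    (∀ k ∈ Finset.Icc 1 i, (∑ m ∈ Finset.Icc 1 k, ξ m t ω) < X (k + 1) (t - 1) ω - Q.cp) →
    X i t ω = ∑ m ∈ Finset.Icc 1 i, ξ m t ω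
  X_stay : ∀ t ω i, 1 ≤ t → 1 ≤ i →
    ¬ (∀ k ∈ Finset.Icc 1 i, (∑ m ∈ Finset.Icc 1 k, ξ m t ω) < X (k + 1) (t - 1) ω - Q.cp) →
    X i t ω = X (i + 1) (t - 1) ω

namespace QueueProcess

variable {Q : QueueParams} {Ω : Type} [MeasurableSpace Ω]

/-- The wave length `W(t)` at step `t`: the least `i ≥ 1` with
`ξ_1(t) + ⋯ + ξ_i(t) ≥ X_{i+1}(t-1) - cp`, or `∞` if there is no such `i`. -/
def W (qp : QueueProcess Q Ω) (t : ℕ) (ω : Ω) : ℕ∞ :=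
  ⨅ n ∈ {n : ℕ | 1 ≤ n ∧
    qp.X (n + 1) (t - 1) ω - Q.cp ≤ ∑ m ∈ Finset.Icc 1 n, qp.ξ m t ω}, (n : ℕ∞)

/-- `ρ⁺(j) = limsup_{τ→∞} τ⁻¹ Σ_{t=1}^τ P(W(t) > j)`. -/
def rhoPlus (qp : QueueProcess Q Ω) (j : ℕ) : ℝ :=
  Filter.limsup (fun τ : ℕ =>
    (τ : ℝ)⁻¹ * ∑ t ∈ Finset.Icc 1 τ, (qp.P {ω | (j : ℕ∞) < qp.W t ω}).toReal) Filter.atTop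

/-- `ρ₋(j) = liminf_{τ→∞} τ⁻¹ Σ_{t=1}^τ P(W(t) > j)`. -/
def rhoMinus (qp : QueueProcess Q Ω) (j : ℕ) : ℝ :=
  Filter.liminf (fun τ : ℕ =>
    (τ : ℝ)⁻¹ * ∑ t ∈ Finset.Icc 1 τ, (qp.P {ω | (j : ℕ∞) < qp.W t ω}).toReal) Filter.atTop

/-- `X*_s(t) = X_{s-t}(t)`: the position of the individual of initial rank `s` at time `t ≤ s`. -/
def Xstar (qp : QueueProcess Q Ω) (s t : ℕ) (ω : Ω) : ℝ := qp.X (s - t) t ω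

/-- `L_s(t0)`: the time since the last move of individual `s`, i.e. the largest `ℓ ≤ t0` with
`X*_s(t0) = X*_s(t0 - ℓ)` (equal to `t0` if individual `s` has never moved). -/
def Lmove (qp : QueueProcess Q Ω) (s t0 : ℕ) (ω : Ω) : ℕ :=
  sSup {ℓ : ℕ | ℓ ≤ t0 ∧ qp.Xstar s t0 ω = qp.Xstar s (t0 - ℓ) ω}

/-- The event `A_{s+1}(t0) = {L_s(t0) = L_{s+1}(t0) < t0}` that individuals `s` and `s+1`
are in the same block at time `t0`. -/
def blockEvent (qp : QueueProcess Q Ω) (s t0 : ℕ) : Set Ω :=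
  {ω | qp.Lmove s t0 ω = qp.Lmove (s + 1) t0 ω ∧ qp.Lmove s t0 ω < t0}

/-- `M(t0) = min{s ≥ t0 : X*_s(t0) = X*_s(0)}` (`∞` if there is no such `s`). -/
def Mfirst (qp : QueueProcess Q Ω) (t0 : ℕ) (ω : Ω) : ℕ∞ :=
  ⨅ s ∈ {s : ℕ | t0 ≤ s ∧ qp.Xstar s t0 ω = qp.Xstar s 0 ω}, (s : ℕ∞)

/-- The natural filtration `ℱ(t) = σ(𝐗(u), 0 ≤ u ≤ t)` of the process. -/
def F (qp : QueueProcess Q Ω) (t : ℕ) : MeasurableSpace Ω :=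
  ⨆ u ∈ Set.Iic t, MeasurableSpace.comap (fun ω (i : ℕ) => qp.X i u ω)
    (inferInstance : MeasurableSpace (ℕ → ℝ))

/-- The σ-field generated by `𝐗_{[s]}(t) = (X_i(t), 0 ≤ i ≤ s - t)`, the positions of
individual `s` and the customers ahead of it at time `t`. -/
def sigmaXupto (qp : QueueProcess Q Ω) (s t : ℕ) : MeasurableSpace Ω :=
  MeasurableSpace.comap (fun ω (i : ℕ) => if i ≤ s - t then qp.X i t ω else 0)
    (inferInstance : MeasurableSpace (ℕ → ℝ))

/-- The σ-field `𝒢_s(t0) = σ(𝐗_{[s]}(t), 0 ≤ t ≤ t0; A_{s+1}(t0))`. -/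
def Gfield (qp : QueueProcess Q Ω) (s t0 : ℕ) : MeasurableSpace Ω :=
  (⨆ t ∈ Set.Iic t0, qp.sigmaXupto s t)
    ⊔ MeasurableSpace.generateFrom {qp.blockEvent s t0}

/-- The event `A_t = {W(t) > s - t}` that individual `s` moves at time `t`. -/
def waveA (qp : QueueProcess Q Ω) (s t : ℕ) : Set Ω :=
  {ω | ((s - t : ℕ) : ℕ∞) < qp.W t ω}

/-- The event `C_t = {W(t) > s - t + j}` of a long wave at time `t`. -/
def waveC (qp : QueueProcess Q Ω) (s j t : ℕ) : Set Ω :=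
  {ω | ((s - t + j : ℕ) : ℕ∞) < qp.W t ω}

/-- The event `B_t` that the long wave at time `t` is good. -/
def waveB (qp : QueueProcess Q Ω) (s j : ℕ) (y : ℝ) (t : ℕ) : Set Ω :=
  qp.waveC s j t ∩ {ω | Q.IsGood j y (fun i => qp.ξ (s - t + i) t ω)}

/-- The successive times `T_u` of good long waves (`T_0 = 0` by convention). -/
def Tgood (qp : QueueProcess Q Ω) (s j : ℕ) (y : ℝ) : ℕ → Ω → ℕ∞
  | 0 => fun _ => 0
  | u + 1 => fun ω =>
      ⨅ t ∈ {t : ℕ | qp.Tgood s j y u ω < (t : ℕ∞) ∧ ω ∈ qp.waveB s j y t}, (t : ℕ∞)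

/-- `N_A(n) = Σ_{t=1}^n 1_{A_t}`, the number of waves up to time `n` that move individual `s`. -/
def NA (qp : QueueProcess Q Ω) (s n : ℕ) (ω : Ω) : ℝ :=
  ∑ t ∈ Finset.Icc 1 n, Set.indicator (qp.waveA s t) (fun _ => (1 : ℝ)) ω

/-- `G(t,x) = t + F_t(x)` where `F_t(x) = max{k : X_k(t) ≤ x} - x` is the centered counting
function of the time-`t` configuration. -/
def G (qp : QueueProcess Q Ω) (t : ℕ) (x : ℝ) (ω : Ω) : ℝ :=
  (t : ℝ) + ((sSup {k : ℕ | qp.X k t ω ≤ x} : ℕ) : ℝ) - x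

end QueueProcess

/-- A coupling, on a sample space `Ω'`, witnessing stochastic domination:
`(ξ̂_1, …, ξ̂_j)` has joint law `ν`, `(ζ_i)_{i ≥ 1}` is i.i.d.(μ), and `ξ̂_i ≤ ζ_i` a.s.
for every `1 ≤ i ≤ j`. -/
structure DominationCoupling (Q : QueueParams) (j : ℕ) (ν : Measure (Fin j → ℝ))
    (Ω' : Type) [MeasurableSpace Ω'] where
  P' : Measure Ω'
  P'_prob : IsProbabilityMeasure P'
  xihat : ℕ → Ω' → ℝ
  zeta : ℕ → Ω' → ℝ
  xihat_meas : ∀ i, Measurable (xihat i)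
  zeta_meas : ∀ i, Measurable (zeta i)
  xihat_law : P'.map (fun ω' (i : Fin j) => xihat ((i : ℕ) + 1) ω') = ν
  zeta_indep : ProbabilityTheory.iIndepFun (m := fun _ : ℕ => (inferInstance : MeasurableSpace ℝ))
    (fun i : ℕ => zeta (i + 1)) P'
  zeta_law : ∀ i, 1 ≤ i → P'.map (zeta i) = Q.μ
  dominated : ∀ᵐ ω' ∂P', ∀ i ∈ Finset.Icc 1 j, xihat i ω' ≤ zeta i ω'

/-! The event is `{(ξ_1, …, ξ_j) ∈ D}` for a lower set `D ⊆ ℝʲ`. Build the conditioned vector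
sequentially from independent uniforms `U_1, …, U_j`: `ξ̂_k` is the quantile transform of `U_k`
under the conditional law of the `k`-th coordinate given `ξ̂_1, …, ξ̂_{k-1}` and `D`. Relative to
`μ`, that law has a density proportional to the measure of a section of `D`, which is antitone
because `D` is a lower set. By Chebyshev's association inequality its distribution function then
dominates that of `μ`, so `ξ̂_k ≤ ζ_k`, the quantile transform of `U_k` under `μ`. -/

open Set
open scoped ENNReal Topology

def quantile (μ : Measure ℝ) (u : ℝ) : ℝ :=
  if u ∈ Ioo 0 1 then sInf {x | u ≤ cdf μ x} else 0

lemma quantile_of_notMem (μ : Measure ℝ) {u : ℝ} (hu : u ∉ Ioo 0 1) : quantile μ u = 0 :=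
  if_neg hu

theorem quantile_le_iff (μ : Measure ℝ) {u : ℝ} (hu : u ∈ Ioo 0 1) (x : ℝ) :
    quantile μ u ≤ x ↔ u ≤ cdf μ x := by
  set S := {x | u ≤ cdf μ x}
  have hne : S.Nonempty :=
    (((tendsto_cdf_atTop μ).eventually (lt_mem_nhds hu.2)).exists).imp fun _ h => h.le
  obtain ⟨x₀, hx₀⟩ := eventually_atBot.1 ((tendsto_cdf_atBot μ).eventually (gt_mem_nhds hu.1))
  have hbdd : BddBelow S := ⟨x₀, fun y hy => le_of_not_gt fun hlt => (hx₀ y hlt.le).not_ge hy⟩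
  -- right continuity of the cdf puts the infimum in `S`
  have hmem : sInf S ∈ S := by
    have hright : ∀ᶠ x in 𝓝[>] sInf S, u ≤ cdf μ x := by
      filter_upwards [self_mem_nhdsWithin] with x hx
      obtain ⟨y, hyS, hyx⟩ := exists_lt_of_csInf_lt hne hx
      exact hyS.trans (monotone_cdf μ hyx.le)
    exact ge_of_tendsto ((cdf μ).right_continuous _ |>.mono Ioi_subset_Ici_self) hright
  rw [quantile, if_pos hu]
  exact ⟨fun h => hmem.trans (monotone_cdf μ h), fun h => csInf_le hbdd h⟩

theorem measurable_quantile_uncurry {α : Type*} [MeasurableSpace α] {κ : α → Measure ℝ}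
    [∀ a, IsProbabilityMeasure (κ a)] (hκ : ∀ x, Measurable fun a => κ a (Iic x)) :
    Measurable fun p : α × ℝ => quantile (κ p.1) p.2 := by
  refine measurable_of_Iic fun x => ?_
  have hcdf : Measurable fun p : α × ℝ => cdf (κ p.1) x := by
    simp_rw [cdf_eq_real, measureReal_def]
    exact (hκ x).ennreal_toReal.comp measurable_fst
  have hpre : (fun p : α × ℝ => quantile (κ p.1) p.2) ⁻¹' Iic x
      = {p | p.2 ∈ Ioo 0 1 ∧ p.2 ≤ cdf (κ p.1) x} ∪ {p | p.2 ∉ Ioo 0 1 ∧ 0 ≤ x} := by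
    ext p
    by_cases hp : p.2 ∈ Ioo 0 1
    · simp only [mem_preimage, mem_Iic, quantile_le_iff _ hp, mem_union, mem_ofPred_eq, hp,
        true_and, not_true_eq_false, false_and, or_false]
    · simp only [mem_preimage, mem_Iic, quantile_of_notMem _ hp, mem_union, mem_ofPred_eq, hp,
        false_and, not_false_eq_true, true_and, false_or]
  rw [hpre]
  exact ((measurable_snd measurableSet_Ioo).inter (measurableSet_le measurable_snd hcdf)).union
    ((measurable_snd measurableSet_Ioo).compl.inter (MeasurableSet.const _))

theorem measurable_quantile (μ : Measure ℝ) [IsProbabilityMeasure μ] : Measurable (quantile μ) :=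
  (measurable_quantile_uncurry (κ := fun _ : Unit => μ) fun _ => measurable_const).comp
    (measurable_const.prodMk measurable_id : Measurable fun u : ℝ => ((), u))

theorem quantile_le_quantile_of_measure_Iic_le {μ ν : Measure ℝ} [IsProbabilityMeasure μ]
    [IsProbabilityMeasure ν] (hμν : ∀ x, μ (Iic x) ≤ ν (Iic x)) (u : ℝ) :
    quantile ν u ≤ quantile μ u := by
  by_cases hu : u ∈ Ioo 0 1
  · rw [quantile_le_iff ν hu]
    calc u ≤ cdf μ (quantile μ u) := (quantile_le_iff μ hu _).1 le_rfl
      _ ≤ cdf ν (quantile μ u) := by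
        rw [cdf_eq_real, cdf_eq_real]
        exact ENNReal.toReal_mono (measure_ne_top _ _) (hμν _)
  · rw [quantile_of_notMem ν hu, quantile_of_notMem μ hu]

def uniform01 : Measure ℝ := volume.restrict (Ioo 0 1)

instance : IsProbabilityMeasure uniform01 := ⟨by simp [uniform01, Real.volume_Ioo]⟩

lemma uniform01_Iic {t : ℝ} (h1 : t ≤ 1) : uniform01 (Iic t) = ENNReal.ofReal t := by
  rw [uniform01, Measure.restrict_apply measurableSet_Iic, inter_comm,
    measure_congr ((Ioo_ae_eq_Ioc (μ := volume)).inter (ae_eq_refl (Iic t))), Ioc_inter_Iic,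
    min_eq_right h1, Real.volume_Ioc, sub_zero]

theorem map_quantile (μ : Measure ℝ) [IsProbabilityMeasure μ] :
    uniform01.map (quantile μ) = μ := by
  refine Measure.ext_of_Iic _ _ fun x => ?_
  have hpre : quantile μ ⁻¹' Iic x ∩ Ioo 0 1 = Iic (cdf μ x) ∩ Ioo 0 1 := by
    ext u
    exact and_congr_left fun hu => quantile_le_iff μ hu x
  rw [Measure.map_apply (measurable_quantile μ) measurableSet_Iic, uniform01,
    Measure.restrict_apply (measurable_quantile μ measurableSet_Iic), hpre,
    ← Measure.restrict_apply measurableSet_Iic, ← uniform01,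
    uniform01_Iic (cdf_le_one μ x), ofReal_cdf]

section Weighted

variable {γ : Type*} [MeasurableSpace γ]

-- The fallback to `μ` when `∫⁻ h ∂μ = 0` keeps this a probability measure.
def weighted (μ : Measure γ) (h : γ → ℝ≥0∞) : Measure γ :=
  if ∫⁻ t, h t ∂μ = 0 then μ else (∫⁻ t, h t ∂μ)⁻¹ • μ.withDensity h

lemma weighted_of_lintegral_ne_zero {μ : Measure γ} {h : γ → ℝ≥0∞} (h0 : ∫⁻ t, h t ∂μ ≠ 0) :
    weighted μ h = (∫⁻ t, h t ∂μ)⁻¹ • μ.withDensity h :=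
  if_neg h0

lemma isProbabilityMeasure_weighted {μ : Measure γ} [IsProbabilityMeasure μ] {h : γ → ℝ≥0∞}
    (hfin : ∫⁻ t, h t ∂μ ≠ ∞) : IsProbabilityMeasure (weighted μ h) := by
  by_cases h0 : ∫⁻ t, h t ∂μ = 0
  · rwa [weighted, if_pos h0]
  · constructor
    rw [weighted_of_lintegral_ne_zero h0, Measure.smul_apply,
      withDensity_apply _ MeasurableSet.univ, Measure.restrict_univ, smul_eq_mul,
      ENNReal.inv_mul_cancel h0 hfin]

lemma measurable_weighted_apply {α : Type*} [MeasurableSpace α] (μ : Measure γ) [SFinite μ]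
    {h : α → γ → ℝ≥0∞} (hh : Measurable (Function.uncurry h)) {s : Set γ} (hs : MeasurableSet s) :
    Measurable fun a => weighted μ (h a) s := by
  have hint : Measurable fun a => ∫⁻ t, h a t ∂μ := hh.lintegral_prod_right'
  have hsint : Measurable fun a => ∫⁻ t in s, h a t ∂μ := hh.lintegral_prod_right'
  simp only [weighted, apply_ite (fun ν : Measure γ => ν s), Measure.smul_apply,
    withDensity_apply _ hs, smul_eq_mul]
  exact Measurable.ite (hint (measurableSet_singleton 0)) measurable_const (hint.inv.mul hsint)

end Weighted

/-- Chebyshev's association inequality. -/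
theorem measure_Iic_mul_lintegral_le {μ : Measure ℝ} [IsProbabilityMeasure μ] {h : ℝ → ℝ≥0∞}
    (hh : Antitone h) (x : ℝ) : μ (Iic x) * ∫⁻ t, h t ∂μ ≤ ∫⁻ t in Iic x, h t ∂μ := by
  set A := ∫⁻ t in Iic x, h t ∂μ
  set B := ∫⁻ t in (Iic x)ᶜ, h t ∂μ
  set p := μ (Iic x)
  set q := μ (Iic x)ᶜ
  have hpq : p + q = 1 := by rw [measure_add_measure_compl measurableSet_Iic, measure_univ]
  have hA : h x * p ≤ A := by
    rw [← setLIntegral_const]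
    exact setLIntegral_mono hh.measurable fun t ht => hh ht
  have hB : B ≤ h x * q := by
    rw [← setLIntegral_const]
    exact setLIntegral_mono measurable_const fun t ht => hh (le_of_lt (not_le.1 ht))
  calc p * ∫⁻ t, h t ∂μ = p * A + p * B := by
        rw [← lintegral_add_compl h measurableSet_Iic, mul_add]
    _ ≤ p * A + q * (h x * p) := by
        have hpB : p * B ≤ q * (h x * p) :=
          calc p * B ≤ p * (h x * q) := by gcongr
            _ = q * (h x * p) := by ring
        exact add_le_add le_rfl hpB
    _ ≤ p * A + q * A := by gcongr
    _ = A := by rw [← add_mul, hpq, one_mul]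

theorem measure_Iic_le_weighted {μ : Measure ℝ} [IsProbabilityMeasure μ] {h : ℝ → ℝ≥0∞}
    (hh : Antitone h) (hfin : ∫⁻ t, h t ∂μ ≠ ∞) (x : ℝ) : μ (Iic x) ≤ weighted μ h (Iic x) := by
  by_cases h0 : ∫⁻ t, h t ∂μ = 0
  · rw [weighted, if_pos h0]
  · rw [weighted_of_lintegral_ne_zero h0, Measure.smul_apply,
      withDensity_apply _ measurableSet_Iic, smul_eq_mul, ← ENNReal.div_eq_inv_mul,
      ENNReal.le_div_iff_mul_le (Or.inl h0) (Or.inl hfin)]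
    exact measure_Iic_mul_lintegral_le hh x

section FinCons

variable {β : Type*} [MeasurableSpace β]

theorem measurable_finCons (r : ℕ) :
    Measurable fun p : β × (Fin r → β) => (Fin.cons p.1 p.2 : Fin (r + 1) → β) :=
  measurable_pi_iff.2 fun i => by
    cases i using Fin.cases with
    | zero => exact measurable_fst
    | succ i => exact (measurable_pi_apply i).comp measurable_snd

theorem measurePreserving_finCons (ν : Measure β) [SigmaFinite ν] (r : ℕ) :
    MeasurePreserving (fun p : β × (Fin r → β) => (Fin.cons p.1 p.2 : Fin (r + 1) → β))
      (ν.prod (Measure.pi fun _ => ν)) (Measure.pi fun _ => ν) := by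
  convert (measurePreserving_piFinSuccAbove (fun _ : Fin (r + 1) => ν) 0).symm using 1
  funext p
  simp [MeasurableEquiv.piFinSuccAbove_symm_apply, Fin.consEquiv]

theorem pi_apply_eq_lintegral_finCons (ν : Measure β) [SigmaFinite ν] {r : ℕ}
    {S : Set (Fin (r + 1) → β)} (hS : MeasurableSet S) :
    Measure.pi (fun _ => ν) S
      = ∫⁻ t, Measure.pi (fun _ : Fin r => ν) {v | Fin.cons t v ∈ S} ∂ν := by
  rw [← (measurePreserving_finCons ν r).measure_preimage hS.nullMeasurableSet,
    Measure.prod_apply (measurable_finCons r hS)]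
  rfl

/-- Under `π[|D]` the first coordinate has law `weighted μ h` with `h t = π {v | Fin.cons t v ∈ D}`,
and given that it is `t` the others have law `π[|{v | Fin.cons t v ∈ D}]`. -/
theorem map_finCons_eq_cond {γ : Type*} [MeasurableSpace γ] {r : ℕ}
    (ν : Measure β) [IsProbabilityMeasure ν] (μ : Measure γ) [IsProbabilityMeasure μ]
    {D : Set (Fin (r + 1) → γ)} (hD : MeasurableSet D) (hD0 : Measure.pi (fun _ => μ) D ≠ 0)
    {q : β → γ} (hq : Measurable q)
    (hq_map : ν.map q = weighted μ fun t => Measure.pi (fun _ => μ) {v | Fin.cons t v ∈ D})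
    {Ψ : γ → (Fin r → β) → Fin r → γ} (hΨ : Measurable (Function.uncurry Ψ))
    (hΨ_map : ∀ t, Measure.pi (fun _ => μ) {v | Fin.cons t v ∈ D} ≠ 0 →
      (Measure.pi fun _ => ν).map (Ψ t) = (Measure.pi fun _ => μ)[|{v | Fin.cons t v ∈ D}]) :
    (Measure.pi fun _ => ν).map (fun u => Fin.cons (q (u 0)) (Ψ (q (u 0)) (Fin.tail u)))
      = (Measure.pi fun _ => μ)[|D] := by
  set π : ∀ n, Measure (Fin n → γ) := fun n => Measure.pi fun _ => μ
  set h : γ → ℝ≥0∞ := fun t => π r {v | Fin.cons t v ∈ D}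
  have hcons := measurable_finCons (β := γ) r
  have hh : Measurable h := measurable_measure_prodMk_left (hcons hD)
  have hint : ∫⁻ t, h t ∂μ = π (r + 1) D := (pi_apply_eq_lintegral_finCons μ hD).symm
  have hΦ : Measurable fun u : Fin (r + 1) → β =>
      (Fin.cons (q (u 0)) (Ψ (q (u 0)) (Fin.tail u)) : Fin (r + 1) → γ) := by
    have hq0 : Measurable fun u : Fin (r + 1) → β => q (u 0) := hq.comp (measurable_pi_apply 0)
    exact hcons.comp (hq0.prodMk (hΨ.comp (hq0.prodMk (measurable_pi_lambda _ fun i =>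
      measurable_pi_apply i.succ))))
  ext S hS
  set G : γ → ℝ≥0∞ := fun t => Measure.pi (fun _ => ν) {w | Fin.cons t (Ψ t w) ∈ S}
  have hG : Measurable G := measurable_measure_prodMk_left
    (hS.preimage (hcons.comp (measurable_fst.prodMk hΨ)))
  -- where the first coordinate is `t`, the remaining ones follow `π r[|D_t]`
  have hhG : ∀ t, h t * G t = π r {v | Fin.cons t v ∈ D ∩ S} := by
    intro t
    by_cases ht : h t = 0
    · rw [ht, zero_mul]
      exact (measure_mono_null (fun v hv => hv.1) ht).symm
    · have hDt : MeasurableSet {v | Fin.cons t v ∈ D} := measurable_prodMk_left (hcons hD)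
      have hGt : G t = (Measure.pi fun _ => ν).map (Ψ t) {v | Fin.cons t v ∈ S} :=
        (Measure.map_apply (hΨ.comp measurable_prodMk_left)
          (measurable_prodMk_left (hcons hS))).symm
      rw [hGt, hΨ_map t ht, cond_apply hDt, ← mul_assoc,
        ENNReal.mul_inv_cancel ht (measure_ne_top _ _), one_mul]
      rfl
  calc (Measure.pi fun _ => ν).map _ S = ∫⁻ s, G (q s) ∂ν := by
        rw [Measure.map_apply hΦ hS,
          ← (measurePreserving_finCons ν r).measure_preimage (hΦ hS).nullMeasurableSet,
          Measure.prod_apply (measurable_finCons r (hΦ hS))]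
        rfl
    _ = (π (r + 1) D)⁻¹ * ∫⁻ t, h t * G t ∂μ := by
        rw [← lintegral_map hG hq, hq_map, weighted_of_lintegral_ne_zero (hint ▸ hD0),
          lintegral_smul_measure, lintegral_withDensity_eq_lintegral_mul μ hh hG, hint,
          smul_eq_mul]
        rfl
    _ = (π (r + 1))[|D] S := by
        simp_rw [hhG]
        rw [← pi_apply_eq_lintegral_finCons μ (hD.inter hS), cond_apply hD]

end FinCons

section ConsPreimage

variable {α β : Type*} [MeasurableSpace α] [MeasurableSpace β] {r : ℕ}

-- The first coordinate joins the parameter.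
def consPreimage (D : Set (α × (Fin (r + 1) → β))) : Set ((α × β) × (Fin r → β)) :=
  {p | (p.1.1, Fin.cons p.1.2 p.2) ∈ D}

lemma measurableSet_consPreimage {D : Set (α × (Fin (r + 1) → β))} (hD : MeasurableSet D) :
    MeasurableSet (consPreimage D) :=
  hD.preimage (measurable_fst.fst.prodMk
    ((measurable_finCons r).comp (measurable_fst.snd.prodMk measurable_snd)))

omit [MeasurableSpace α] [MeasurableSpace β] in
lemma isLowerSet_consPreimage [Preorder β] {D : Set (α × (Fin (r + 1) → β))}
    (hD : ∀ a, IsLowerSet (Prod.mk a ⁻¹' D)) (b : α × β) :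
    IsLowerSet (Prod.mk b ⁻¹' consPreimage D) :=
  fun _ _ hwv hv => hD b.1 (Fin.cons_le_cons.2 ⟨le_rfl, hwv⟩) hv

end ConsPreimage

/-- The parameter `a` stands for the coordinates constructed so far; measurability in `a` is what
lets the construction be iterated. -/
structure IsDominatedTransport {α : Type*} [MeasurableSpace α] {r : ℕ} (μ : Measure ℝ)
    [IsProbabilityMeasure μ] (D : Set (α × (Fin r → ℝ))) (Φ : α → (Fin r → ℝ) → Fin r → ℝ) :
    Prop where
  measurable : Measurable (Function.uncurry Φ)
  map_eq : ∀ a, Measure.pi (fun _ => μ) (Prod.mk a ⁻¹' D) ≠ 0 →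
    (Measure.pi fun _ => uniform01).map (Φ a) = (Measure.pi fun _ => μ)[|Prod.mk a ⁻¹' D]
  le_quantile : ∀ a u i, Φ a u i ≤ quantile μ (u i)

theorem isDominatedTransport_zero {α : Type*} [MeasurableSpace α] (μ : Measure ℝ)
    [IsProbabilityMeasure μ] (D : Set (α × (Fin 0 → ℝ))) :
    IsDominatedTransport μ D fun _ u => u where
  measurable := measurable_snd
  map_eq a hD0 := by
    have := cond_isProbabilityMeasure hD0
    ext s hs
    rcases s.eq_empty_or_nonempty with rfl | hne
    · simp
    · simp [hne.eq_univ]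
  le_quantile _ _ i := i.elim0

theorem IsDominatedTransport.exists_succ {α : Type*} [MeasurableSpace α] {r : ℕ} {μ : Measure ℝ}
    [IsProbabilityMeasure μ] {D : Set (α × (Fin (r + 1) → ℝ))} (hD : MeasurableSet D)
    (hlow : ∀ a, IsLowerSet (Prod.mk a ⁻¹' D)) {Ψ : α × ℝ → (Fin r → ℝ) → Fin r → ℝ}
    (hΨ : IsDominatedTransport μ (consPreimage D) Ψ) :
    ∃ Φ, IsDominatedTransport μ D Φ := by
  let h : α → ℝ → ℝ≥0∞ := fun a t => Measure.pi (fun _ => μ) {v | (a, Fin.cons t v) ∈ D}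
  have hh : Measurable (Function.uncurry h) :=
    measurable_measure_prodMk_left (measurableSet_consPreimage hD)
  have hfin : ∀ a, ∫⁻ t, h a t ∂μ ≠ ∞ := fun a =>
    pi_apply_eq_lintegral_finCons μ (measurable_prodMk_left hD) ▸ measure_ne_top _ _
  -- `Dₐ` is a lower set, so the conditional density of the first coordinate is antitone
  have hanti : ∀ a, Antitone (h a) := fun a _ _ htt' =>
    measure_mono fun _ hv => hlow a (Fin.cons_le_cons.2 ⟨htt', le_rfl⟩) hv
  have := fun a => isProbabilityMeasure_weighted (h := h a) (hfin a)
  let q : α → ℝ → ℝ := fun a => quantile (weighted μ (h a))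
  have hq : Measurable (Function.uncurry q) :=
    measurable_quantile_uncurry (κ := fun a => weighted μ (h a)) fun x =>
      measurable_weighted_apply μ hh (measurableSet_Iic (a := x))
  refine ⟨fun a u => Fin.cons (q a (u 0)) (Ψ (a, q a (u 0)) (Fin.tail u)), ⟨?_, ?_, ?_⟩⟩
  · have hq0 : Measurable fun p : α × (Fin (r + 1) → ℝ) => q p.1 (p.2 0) :=
      hq.comp (measurable_fst.prodMk ((measurable_pi_apply 0).comp measurable_snd))
    exact (measurable_finCons r).comp (hq0.prodMk (hΨ.measurable.comp
      ((measurable_fst.prodMk hq0).prodMk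
        (measurable_pi_lambda _ fun i => (measurable_pi_apply i.succ).comp measurable_snd))))
  · intro a hD0
    exact map_finCons_eq_cond uniform01 μ (measurable_prodMk_left hD) hD0 (q := q a)
      (Ψ := fun t => Ψ (a, t)) (hq.comp measurable_prodMk_left) (map_quantile _)
      (hΨ.measurable.comp ((measurable_const.prodMk measurable_fst).prodMk measurable_snd))
      fun t => hΨ.map_eq (a, t)
  · intro a u i
    cases i using Fin.cases with
    | zero =>
      exact quantile_le_quantile_of_measure_Iic_le (measure_Iic_le_weighted (hanti a) (hfin a)) _
    | succ i => exact hΨ.le_quantile _ _ i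

theorem exists_isDominatedTransport (μ : Measure ℝ) [IsProbabilityMeasure μ] (r : ℕ) :
    ∀ {α : Type} [MeasurableSpace α] {D : Set (α × (Fin r → ℝ))}, MeasurableSet D →
      (∀ a, IsLowerSet (Prod.mk a ⁻¹' D)) → ∃ Φ, IsDominatedTransport μ D Φ := by
  induction r with
  | zero => exact fun {_} _ D _ _ => ⟨_, isDominatedTransport_zero μ D⟩
  | succ r ih =>
    intro α _ D hD hlow
    obtain ⟨Ψ, hΨ⟩ := ih (measurableSet_consPreimage hD) (isLowerSet_consPreimage hlow)
    exact hΨ.exists_succ hD hlow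

lemma map_cond_preimage {Ω β : Type*} [MeasurableSpace Ω] [MeasurableSpace β] (P : Measure Ω)
    {X : Ω → β} (hX : Measurable X) {D : Set β} (hD : MeasurableSet D) :
    (P[|X ⁻¹' D]).map X = (P.map X)[|D] := by
  ext S hS
  rw [Measure.map_apply hX hS, cond_apply (hX hD), cond_apply hD, Measure.map_apply hX hD,
    Measure.map_apply hX (hD.inter hS), preimage_inter]

lemma map_infinitePi_shift_eq_pi {β : Type*} [MeasurableSpace β] (ν : Measure β)
    [IsProbabilityMeasure ν] (j : ℕ) :
    (Measure.infinitePi fun _ : ℕ => ν).map (fun ω (k : Fin j) => ω (k + 1))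
      = Measure.pi fun _ => ν := by
  rw [Measure.map_infinitePi_infinitePi_of_inj (f := fun k : Fin j => (k : ℕ) + 1)
    fun k l hkl => Fin.ext (Nat.succ_injective hkl), Measure.infinitePi_eq_pi]

theorem nonempty_dominationCoupling_cond (Q : QueueParams) [IsProbabilityMeasure Q.μ] {j : ℕ}
    {D : Set (Fin j → ℝ)} (hD : MeasurableSet D) (hlow : IsLowerSet D)
    (hD0 : Measure.pi (fun _ => Q.μ) D ≠ 0) :
    Nonempty (DominationCoupling Q j ((Measure.pi fun _ => Q.μ)[|D]) (ℕ → ℝ)) := by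
  obtain ⟨Φ, hΦ⟩ := exists_isDominatedTransport Q.μ j (α := Unit) (D := Prod.snd ⁻¹' D)
    (measurable_snd hD) fun _ => hlow
  let U : (ℕ → ℝ) → Fin j → ℝ := fun ω k => ω (k + 1)
  have hU : Measurable U := measurable_pi_lambda _ fun k => measurable_pi_apply _
  let xihat : ℕ → (ℕ → ℝ) → ℝ := fun i ω => if h : i - 1 < j then Φ () (U ω) ⟨i - 1, h⟩ else 0
  have hxihat : ∀ k : Fin j, xihat (k + 1) = fun ω => Φ () (U ω) k := fun k => by
    funext ω
    simp only [xihat, add_tsub_cancel_right, Fin.is_lt, dif_pos, Fin.eta]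
  refine ⟨{
    P' := Measure.infinitePi fun _ => uniform01
    P'_prob := inferInstance
    xihat := xihat
    zeta := fun i ω => quantile Q.μ (ω i)
    xihat_meas := fun i => ?_
    zeta_meas := fun i => (measurable_quantile Q.μ).comp (measurable_pi_apply i)
    xihat_law := ?_
    zeta_indep := (iIndepFun_infinitePi fun _ => measurable_quantile Q.μ).precomp
      Nat.succ_injective
    zeta_law := fun i _ => ?_
    dominated := Eventually.of_forall fun ω i hi => ?_ }⟩
  · by_cases h : i - 1 < j
    · simp only [xihat, dif_pos h]
      exact (measurable_pi_apply _).comp (hΦ.measurable.comp (measurable_const.prodMk hU))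
    · simp only [xihat, dif_neg h]
      exact measurable_const
  · have hΦ0 : Measurable (Φ ()) := hΦ.measurable.comp (measurable_const.prodMk measurable_id)
    simp_rw [hxihat]
    rw [show (fun ω i => Φ () (U ω) i) = Φ () ∘ U from rfl, ← Measure.map_map hΦ0 hU,
      map_infinitePi_shift_eq_pi]
    exact hΦ.map_eq () hD0
  · rw [show (fun ω : ℕ → ℝ => quantile Q.μ (ω i)) = quantile Q.μ ∘ fun ω => ω i from rfl,
      ← Measure.map_map (measurable_quantile Q.μ) (measurable_pi_apply i),
      Measure.infinitePi_map_eval, map_quantile]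
  · obtain ⟨k, rfl⟩ : ∃ k : Fin j, i = k + 1 :=
      ⟨⟨i - 1, by simp only [Finset.mem_Icc] at hi; omega⟩, by
        simp only [Finset.mem_Icc] at hi; show i = i - 1 + 1; omega⟩
    rw [hxihat]
    exact hΦ.le_quantile () (U ω) k

def partialSumsBelow (a : ℕ → ℝ) (j : ℕ) : Set (Fin j → ℝ) :=
  {v | ∀ k ∈ Finset.Icc 1 j, ∑ i ∈ Finset.univ.filter (fun i : Fin j => (i : ℕ) < k), v i < a k}

lemma measurableSet_partialSumsBelow (a : ℕ → ℝ) (j : ℕ) :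
    MeasurableSet (partialSumsBelow a j) := by
  simp only [partialSumsBelow, ofPred_forall]
  exact .iInter fun k => .iInter fun _ => measurableSet_lt (by fun_prop) measurable_const

lemma isLowerSet_partialSumsBelow (a : ℕ → ℝ) (j : ℕ) : IsLowerSet (partialSumsBelow a j) :=
  fun _ _ hwv hv k hk => (Finset.sum_le_sum fun i _ => hwv i).trans_lt (hv k hk)

lemma sum_fin_filter_lt_eq_sum_Icc {M : Type*} [AddCommMonoid M] (f : ℕ → M) {j k : ℕ}
    (hk : k ≤ j) :
    ∑ i ∈ Finset.univ.filter (fun i : Fin j => (i : ℕ) < k), f (i + 1)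
      = ∑ i ∈ Finset.Icc 1 k, f i :=
  Finset.sum_bij' (fun i _ => (i : ℕ) + 1)
    (fun n hn => ⟨n - 1, by simp only [Finset.mem_Icc] at hn; omega⟩)
    (fun i hi => by
      simp only [Finset.mem_filter, Finset.mem_univ, true_and] at hi
      simp only [Finset.mem_Icc]
      omega)
    (fun n hn => by
      simp only [Finset.mem_Icc] at hn
      simp only [Finset.mem_filter, Finset.mem_univ, true_and]
      omega)
    (fun i _ => Fin.ext (Nat.add_sub_cancel i 1))
    (fun n hn => by
      simp only [Finset.mem_Icc] at hn
      show n - 1 + 1 = n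
      omega)
    fun _ _ => rfl

theorem conditioned_spacings_dominated_general (Q : QueueParams) (Ω : Type) [MeasurableSpace Ω]
    (P : Measure Ω) (hP : IsProbabilityMeasure P)
    (ξ : ℕ → Ω → ℝ) (hmeas : ∀ i, 1 ≤ i → Measurable (ξ i))
    (hlaw : ∀ i, 1 ≤ i → P.map (ξ i) = Q.μ)
    (hindep : ProbabilityTheory.iIndepFun (m := fun _ : ℕ => (inferInstance : MeasurableSpace ℝ))
      (fun i : ℕ => ξ (i + 1)) P)
    (j : ℕ) (a : ℕ → ℝ)
    (hpos : 0 < P {ω | ∀ k ∈ Finset.Icc 1 j, (∑ i ∈ Finset.Icc 1 k, ξ i ω) < a k}) :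
    ∃ (Ω' : Type) (m' : MeasurableSpace Ω'),
      Nonempty (@DominationCoupling Q j
        ((ProbabilityTheory.cond P
            {ω | ∀ k ∈ Finset.Icc 1 j, (∑ i ∈ Finset.Icc 1 k, ξ i ω) < a k}).map
          (fun ω (i : Fin j) => ξ ((i : ℕ) + 1) ω)) Ω' m') := by
  have := Q.μ_prob
  set X : Ω → Fin j → ℝ := fun ω i => ξ ((i : ℕ) + 1) ω
  have hX : Measurable X := measurable_pi_lambda _ fun i => hmeas _ (Nat.le_add_left 1 i)
  set D := partialSumsBelow a j
  have hD := measurableSet_partialSumsBelow a j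
  have hE : {ω | ∀ k ∈ Finset.Icc 1 j, (∑ i ∈ Finset.Icc 1 k, ξ i ω) < a k} = X ⁻¹' D := by
    ext ω
    refine forall₂_congr fun k hk => ?_
    rw [← sum_fin_filter_lt_eq_sum_Icc (ξ · ω) (Finset.mem_Icc.1 hk).2]
  have hXlaw : P.map X = Measure.pi fun _ => Q.μ := by
    have hindepX : iIndepFun (fun i : Fin j => ξ ((i : ℕ) + 1)) P :=
      hindep.precomp Fin.val_injective
    rw [(iIndepFun_iff_map_fun_eq_pi_map fun i => (hmeas _ (Nat.le_add_left 1 _)).aemeasurable).1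
      hindepX]
    simp_rw [hlaw _ (Nat.le_add_left 1 _)]
  have hD0 : Measure.pi (fun _ => Q.μ) D ≠ 0 := by
    rw [← hXlaw, Measure.map_apply hX hD, ← hE]
    exact hpos.ne'
  rw [hE, map_cond_preimage P hX hD, hXlaw]
  exact ⟨_, _, nonempty_dominationCoupling_cond Q hD (isLowerSet_partialSumsBelow a j) hD0⟩

theorem conditioned_spacings_dominated (Q : QueueParams) (Ω : Type) [MeasurableSpace Ω]
    (P : Measure Ω) (hP : IsProbabilityMeasure P)
    (ξ : ℕ → Ω → ℝ) (hmeas : ∀ i, 1 ≤ i → Measurable (ξ i))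
    (hlaw : ∀ i, 1 ≤ i → P.map (ξ i) = Q.μ)
    (hindep : ProbabilityTheory.iIndepFun (m := fun _ : ℕ => (inferInstance : MeasurableSpace ℝ))
      (fun i : ℕ => ξ (i + 1)) P)
    (j : ℕ) (hj : 1 ≤ j) (a : ℕ → ℝ)
    (hpos : 0 < P {ω | ∀ k ∈ Finset.Icc 1 j, (∑ i ∈ Finset.Icc 1 k, ξ i ω) < a k}) :
    ∃ (Ω' : Type) (m' : MeasurableSpace Ω'),
      Nonempty (@DominationCoupling Q j
        ((ProbabilityTheory.cond P
            {ω | ∀ k ∈ Finset.Icc 1 j, (∑ i ∈ Finset.Icc 1 k, ξ i ω) < a k}).map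
          (fun ω (i : Fin j) => ξ ((i : ℕ) + 1) ω)) Ω' m') :=
  conditioned_spacings_dominated_general Q Ω P hP ξ hmeas hlaw hindep j a hpos
end
end

section
/- For the spatial queue process started from any initial configuration, and for all integers t_0 ≥ 1 and s ≥ t_0, the following event inclusion holds: A_{s+1}(t_0)^c ⊆ { M(t_0) ≤ s } ∪ ⋃_{ℓ=0}^{t_0−1} { W(t_0 − ℓ) = s − t_0 + ℓ + 1 }. Consequently P( A_{s+1}(t_0)^c ) ≤ P( M(t_0) ≤ s ) + Σ_{ℓ=0}^{t_0−1} P( W(t_0 − ℓ) = s − t_0 + ℓ + 1 ). -/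
open MeasureTheory ProbabilityTheory Filter

noncomputable section

/-!
Individuals only move towards the origin, so `t ↦ X*_s(t)` is antitone on `[0, s]` and
`ℓ ≤ L_s(t₀) ↔ X*_s(t₀ - ℓ) = X*_s(t₀)`. Individual `s` moves at time `t` exactly when
`W(t) > s - t`, so a wave that moves `s + 1` also moves `s`, whence `L_s(t₀) ≤ L_{s+1}(t₀)`.
If this inequality is strict, the wave at time `t = t₀ - L_s(t₀)` moved `s` but not `s + 1`,
i.e. `W(t) = s - t + 1`. Otherwise `A_{s+1}(t₀)` fails only if `s` never moved, and then
`M(t₀) ≤ s`.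
-/

theorem QueueParams.IsConfig.cm_le {Q : QueueParams} {x : ℕ → ℝ} (hx : Q.IsConfig x) (i : ℕ) :
    Q.cm ≤ x (i + 1) := by
  induction i with
  | zero => simpa [hx.1] using (hx.2 0).1
  | succ i ih => linarith [(hx.2 (i + 1)).1, Q.cm_pos]

theorem MeasureTheory.measureReal_le_add_sum_of_subset {α ι : Type*} [MeasurableSpace α]
    {μ : Measure α} [IsFiniteMeasure μ] {A B : Set α} {C : ι → Set α} {I : Finset ι}
    (h : A ⊆ B ∪ ⋃ i ∈ I, C i) : μ.real A ≤ μ.real B + ∑ i ∈ I, μ.real (C i) :=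
  (measureReal_mono h).trans <|
    (measureReal_union_le _ _).trans (add_le_add le_rfl (measureReal_biUnion_finset_le _ _))

namespace QueueProcess

variable {Q : QueueParams} {Ω : Type} [MeasurableSpace Ω] (qp : QueueProcess Q Ω) {ω : Ω}

theorem natCast_lt_W_iff {n t : ℕ} : (n : ℕ∞) < qp.W t ω ↔
    ∀ k ∈ Finset.Icc 1 n, ∑ m ∈ Finset.Icc 1 k, qp.ξ m t ω < qp.X (k + 1) (t - 1) ω - Q.cp := by
  rw [← ENat.add_one_le_iff (ENat.natCast_ne_top n), W, le_iInf₂_iff]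
  constructor
  · intro h k hk
    by_contra hlt
    have := h k ⟨(Finset.mem_Icc.1 hk).1, not_lt.1 hlt⟩
    norm_cast at this
    exact absurd (Finset.mem_Icc.1 hk).2 (by omega)
  · rintro h k ⟨hk, hstop⟩
    by_contra hle
    norm_cast at hle
    have hkn : k ≤ n := by omega
    exact absurd hstop (not_le.2 (h k (Finset.mem_Icc.2 ⟨hk, hkn⟩)))

theorem cm_le_X (i t : ℕ) : Q.cm ≤ qp.X (i + 1) t ω := by
  induction t generalizing i with
  | zero => rw [qp.X_init]; exact qp.x0_config.cm_le i
  | succ t ih =>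
    by_cases hmove : ∀ k ∈ Finset.Icc 1 (i + 1),
        ∑ m ∈ Finset.Icc 1 k, qp.ξ m (t + 1) ω < qp.X (k + 1) (t + 1 - 1) ω - Q.cp
    · rw [qp.X_move _ _ _ (by omega) (by omega) hmove]
      have hξ : ∀ m ∈ Finset.Icc 1 (i + 1), Q.cm ≤ qp.ξ m (t + 1) ω := fun m hm =>
        (qp.ξ_range _ _ _ (Finset.mem_Icc.1 hm).1 (by omega)).1
      calc Q.cm ≤ qp.ξ 1 (t + 1) ω := hξ 1 (by simp)
        _ ≤ _ := Finset.single_le_sum (fun m hm => (Q.cm_pos.trans_le (hξ m hm)).le)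
            (by simp)
    · rw [qp.X_stay _ _ _ (by omega) (by omega) hmove]
      exact ih (i + 1)

theorem X_lt_of_lt_W {i t : ℕ} (ht : 1 ≤ t) (h : (i : ℕ∞) < qp.W t ω) :
    qp.X i t ω < qp.X (i + 1) (t - 1) ω := by
  rcases Nat.eq_zero_or_pos i with rfl | hi
  · rw [qp.X_zero]
    exact Q.cm_pos.trans_le (qp.cm_le_X 0 _)
  · have hmove := (qp.natCast_lt_W_iff).1 h
    rw [qp.X_move t ω i ht hi hmove]
    linarith [hmove i (Finset.mem_Icc.2 ⟨hi, le_rfl⟩), Q.cm_pos.trans Q.cm_lt_cp]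

theorem X_eq_of_W_le {i t : ℕ} (ht : 1 ≤ t) (h : qp.W t ω ≤ i) :
    qp.X i t ω = qp.X (i + 1) (t - 1) ω := by
  have hW : (0 : ℕ∞) < qp.W t ω := by simpa using (qp.natCast_lt_W_iff (n := 0)).2 (by simp)
  have hi : 0 < i := by exact_mod_cast hW.trans_le h
  exact qp.X_stay t ω i ht hi (by rwa [← natCast_lt_W_iff, not_lt])

theorem X_le_X_succ_pred {i t : ℕ} (ht : 1 ≤ t) : qp.X i t ω ≤ qp.X (i + 1) (t - 1) ω := by
  rcases lt_or_ge (i : ℕ∞) (qp.W t ω) with h | h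
  · exact (qp.X_lt_of_lt_W ht h).le
  · exact (qp.X_eq_of_W_le ht h).le

theorem X_eq_iff_W_le {i t : ℕ} (ht : 1 ≤ t) :
    qp.X i t ω = qp.X (i + 1) (t - 1) ω ↔ qp.W t ω ≤ i :=
  ⟨fun h => not_lt.1 fun hlt => (qp.X_lt_of_lt_W ht hlt).ne h, qp.X_eq_of_W_le ht⟩

theorem Xstar_eq_X_succ {s t : ℕ} (h : t + 1 ≤ s) :
    qp.Xstar s t ω = qp.X (s - (t + 1) + 1) t ω := by
  unfold Xstar
  congr 1
  omega

theorem Xstar_antitoneOn (s : ℕ) : AntitoneOn (fun t => qp.Xstar s t ω) (Set.Iic s) :=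
  antitoneOn_of_succ_le Set.ordConnected_Iic fun t _ _ ht => by
    rw [Order.succ_eq_add_one] at ht ⊢
    rw [Xstar_eq_X_succ qp ht]
    exact qp.X_le_X_succ_pred (by omega)

theorem Xstar_succ_eq_iff {s t : ℕ} (h : t + 1 ≤ s) :
    qp.Xstar s (t + 1) ω = qp.Xstar s t ω ↔ qp.W (t + 1) ω ≤ ((s - (t + 1) : ℕ) : ℕ∞) := by
  rw [Xstar_eq_X_succ qp h]
  exact qp.X_eq_iff_W_le (by omega)

theorem Lmove_le (s t0 : ℕ) : qp.Lmove s t0 ω ≤ t0 :=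
  csSup_le' fun _ h => h.1

theorem le_Lmove_iff {s t0 ℓ : ℕ} (hs : t0 ≤ s) (hℓ : ℓ ≤ t0) :
    ℓ ≤ qp.Lmove s t0 ω ↔ qp.Xstar s (t0 - ℓ) ω = qp.Xstar s t0 ω := by
  have hbdd : BddAbove {ℓ : ℕ | ℓ ≤ t0 ∧ qp.Xstar s t0 ω = qp.Xstar s (t0 - ℓ) ω} :=
    ⟨t0, fun _ h => h.1⟩
  refine ⟨fun h => ?_, fun h => le_csSup hbdd ⟨hℓ, h.symm⟩⟩
  obtain ⟨hL, hLeq⟩ : qp.Lmove s t0 ω ∈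
      {ℓ : ℕ | ℓ ≤ t0 ∧ qp.Xstar s t0 ω = qp.Xstar s (t0 - ℓ) ω} :=
    Nat.sSup_mem ⟨0, by simp⟩ hbdd
  have hanti := qp.Xstar_antitoneOn (ω := ω) s
  refine le_antisymm ?_ (hanti (Set.mem_Iic.2 (by omega)) (Set.mem_Iic.2 hs) (by omega))
  calc qp.Xstar s (t0 - ℓ) ω ≤ qp.Xstar s (t0 - qp.Lmove s t0 ω) ω :=
        hanti (Set.mem_Iic.2 (by omega)) (Set.mem_Iic.2 (by omega)) (by omega)
    _ = qp.Xstar s t0 ω := hLeq.symm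

theorem W_le_iff_lt_Lmove {s t0 ℓ : ℕ} (hs : t0 ≤ s) (hℓ : ℓ < t0) (hL : ℓ ≤ qp.Lmove s t0 ω) :
    qp.W (t0 - ℓ) ω ≤ ((s - (t0 - ℓ) : ℕ) : ℕ∞) ↔ ℓ < qp.Lmove s t0 ω := by
  have hsucc : t0 - ℓ = t0 - (ℓ + 1) + 1 := by omega
  rw [hsucc, ← qp.Xstar_succ_eq_iff (by omega), ← hsucc, (qp.le_Lmove_iff hs hℓ.le).1 hL,
    eq_comm, ← qp.le_Lmove_iff hs hℓ]
  omega

theorem Lmove_le_Lmove_succ {s t0 : ℕ} (hs : t0 ≤ s) :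
    qp.Lmove s t0 ω ≤ qp.Lmove (s + 1) t0 ω := by
  by_contra! h
  set ℓ := qp.Lmove (s + 1) t0 ω
  have hℓ : ℓ < t0 := h.trans_le (qp.Lmove_le s t0)
  have hmoves := (qp.W_le_iff_lt_Lmove (s := s + 1) (by omega) hℓ le_rfl).not.2 (lt_irrefl ℓ)
  have hstays := (qp.W_le_iff_lt_Lmove hs hℓ h.le).2 h
  exact hmoves (hstays.trans (by gcongr; omega))

theorem W_eq_of_Lmove_lt_Lmove_succ {s t0 : ℕ} (hs : t0 ≤ s) (hL : qp.Lmove s t0 ω < t0)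
    (h : qp.Lmove s t0 ω < qp.Lmove (s + 1) t0 ω) :
    qp.W (t0 - qp.Lmove s t0 ω) ω = ((s - t0 + qp.Lmove s t0 ω + 1 : ℕ) : ℕ∞) := by
  set ℓ := qp.Lmove s t0 ω
  have hmoves := (qp.W_le_iff_lt_Lmove hs hL le_rfl).not.2 (lt_irrefl ℓ)
  have hstays := (qp.W_le_iff_lt_Lmove (s := s + 1) (by omega) hL h.le).2 h
  rw [show s + 1 - (t0 - ℓ) = s - (t0 - ℓ) + 1 by omega] at hstays
  rw [show s - t0 + ℓ + 1 = s - (t0 - ℓ) + 1 by omega]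
  refine le_antisymm hstays ?_
  push_cast
  exact Order.add_one_le_of_lt (not_le.1 hmoves)

theorem compl_blockEvent_subset {s t0 : ℕ} (hs : t0 ≤ s) :
    (qp.blockEvent s t0)ᶜ ⊆
      {ω | qp.Mfirst t0 ω ≤ (s : ℕ∞)} ∪
        ⋃ ℓ ∈ Finset.range t0, {ω | qp.W (t0 - ℓ) ω = ((s - t0 + ℓ + 1 : ℕ) : ℕ∞)} := by
  intro ω hω
  by_cases hnever : t0 ≤ qp.Lmove s t0 ω
  · left
    have hstill := (qp.le_Lmove_iff hs le_rfl).1 hnever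
    rw [Nat.sub_self] at hstill
    exact (iInf₂_le s ⟨hs, hstill.symm⟩ : qp.Mfirst t0 ω ≤ s)
  · right
    replace hnever := not_le.1 hnever
    have hne : qp.Lmove s t0 ω ≠ qp.Lmove (s + 1) t0 ω := fun heq => hω ⟨heq, hnever⟩
    simp only [Set.mem_iUnion, Finset.mem_range]
    exact ⟨_, hnever, qp.W_eq_of_Lmove_lt_Lmove_succ hs hnever
      ((qp.Lmove_le_Lmove_succ hs).lt_of_ne hne)⟩

end QueueProcess

theorem blockEvent_compl_subset_general (Q : QueueParams) {Ω : Type} [MeasurableSpace Ω]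
    (qp : QueueProcess Q Ω) (t0 s : ℕ) (hs : t0 ≤ s) :
    (qp.blockEvent s t0)ᶜ ⊆
      ({ω | qp.Mfirst t0 ω ≤ (s : ℕ∞)} ∪
        ⋃ ℓ ∈ Finset.range t0, {ω | qp.W (t0 - ℓ) ω = ((s - t0 + ℓ + 1 : ℕ) : ℕ∞)}) ∧
    (qp.P (qp.blockEvent s t0)ᶜ).toReal
      ≤ (qp.P {ω | qp.Mfirst t0 ω ≤ (s : ℕ∞)}).toReal
        + ∑ ℓ ∈ Finset.range t0,
            (qp.P {ω | qp.W (t0 - ℓ) ω = ((s - t0 + ℓ + 1 : ℕ) : ℕ∞)}).toReal := by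
  have := qp.P_prob
  have hsub := qp.compl_blockEvent_subset hs
  exact ⟨hsub, measureReal_le_add_sum_of_subset hsub⟩

theorem blockEvent_compl_subset (Q : QueueParams) {Ω : Type} [MeasurableSpace Ω]
    (qp : QueueProcess Q Ω) (t0 s : ℕ) (ht0 : 1 ≤ t0) (hs : t0 ≤ s) :
    (qp.blockEvent s t0)ᶜ ⊆
      ({ω | qp.Mfirst t0 ω ≤ (s : ℕ∞)} ∪
        ⋃ ℓ ∈ Finset.range t0, {ω | qp.W (t0 - ℓ) ω = ((s - t0 + ℓ + 1 : ℕ) : ℕ∞)}) ∧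
    (qp.P (qp.blockEvent s t0)ᶜ).toReal
      ≤ (qp.P {ω | qp.Mfirst t0 ω ≤ (s : ℕ∞)}).toReal
        + ∑ ℓ ∈ Finset.range t0,
            (qp.P {ω | qp.W (t0 - ℓ) ω = ((s - t0 + ℓ + 1 : ℕ) : ℕ∞)}).toReal :=
  blockEvent_compl_subset_general Q qp t0 s hs
end
end

section
/- For the spatial queue process started from any initial configuration, define the centered counting function F_t(x) = max{k ≥ 0 : X_k(t) ≤ x} − x and G(t, x) = t + F_t(x) for x ≥ 0. Then for every t ≥ 1 and every real x ≥ X_{W(t)}(t): G(t, x) = G(t−1, x). (The graphs of consecutive functions G(t−1, ·) and G(t, ·) coalesce from the position of the first unmoved customer onward.) -/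
open MeasureTheory ProbabilityTheory Filter

noncomputable section

/-!
Beyond the first unmoved customer a step of the queue is a pure shift of ranks:
`X_i(t) = X_{i+1}(t-1)` for `i ≥ W(t)`. So for `x ≥ X_{W(t)}(t)` the number of customers in
`[0, x]` drops by exactly one from time `t - 1` to time `t`, which the `t` in `G` compensates.
The counts are finite because `X_k(t) ≥ k c_-` at all times.
-/

lemma ENat.mem_of_biInf_natCast_eq {A : Set ℕ} {w : ℕ} (h : ⨅ n ∈ A, (n : ℕ∞) = w) : w ∈ A := by
  have hA : A.Nonempty := by
    by_contra hA
    simp [Set.not_nonempty_iff_eq_empty.mp hA] at h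
  rw [← ENat.natCast_sInf hA, Nat.cast_inj] at h
  exact h ▸ Nat.sInf_mem hA

lemma Nat.sSup_setOf_eq_sSup_setOf_shift_add_one {p q : ℕ → Prop} {w : ℕ}
    (hshift : ∀ i, w ≤ i → (q i ↔ p (i + 1))) (hw : q w) (hp : BddAbove {k | p k}) :
    sSup {k | p k} = sSup {k | q k} + 1 := by
  have hpw : p (w + 1) := (hshift w le_rfl).mp hw
  have hw_le : w + 1 ≤ sSup {k | p k} := le_csSup hp hpw
  have hq : BddAbove {k | q k} := by
    refine ⟨sSup {k | p k}, fun k hk => ?_⟩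
    rcases lt_or_ge k w with hkw | hkw
    · omega
    · have := le_csSup hp ((hshift k hkw).mp hk)
      omega
  have hqs : q (sSup {k | q k}) := Nat.sSup_mem ⟨w, hw⟩ hq
  have hps : p (sSup {k | p k}) := Nat.sSup_mem ⟨w + 1, hpw⟩ hp
  have hwq : w ≤ sSup {k | q k} := le_csSup hq hw
  have h_le : sSup {k | q k} + 1 ≤ sSup {k | p k} := le_csSup hp ((hshift _ hwq).mp hqs)
  have h_ge : sSup {k | p k} - 1 ≤ sSup {k | q k} := by
    refine le_csSup hq ((hshift _ (by omega)).mpr ?_)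
    rwa [Nat.sub_add_cancel (by omega)]
  omega

namespace QueueProcess

variable {Q : QueueParams} {Ω : Type} [MeasurableSpace Ω]

lemma natCast_mul_cm_le_X (qp : QueueProcess Q Ω) (ω : Ω) (t k : ℕ) :
    (k : ℝ) * Q.cm ≤ qp.X k t ω := by
  induction t generalizing k with
  | zero =>
    rw [qp.X_init]
    induction k with
    | zero => simp [qp.x0_config.1]
    | succ k ih =>
      have := (qp.x0_config.2 k).1
      push_cast
      linarith
  | succ t ih =>
    rcases Nat.eq_zero_or_pos k with rfl | hk
    · simp [qp.X_zero]
    by_cases hmove : ∀ j ∈ Finset.Icc 1 k,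
        (∑ m ∈ Finset.Icc 1 j, qp.ξ m (t + 1) ω) < qp.X (j + 1) (t + 1 - 1) ω - Q.cp
    · rw [qp.X_move (t + 1) ω k (by omega) hk hmove]
      simpa using Finset.card_nsmul_le_sum (Finset.Icc 1 k) (qp.ξ · (t + 1) ω) Q.cm
        fun m hm => (qp.ξ_range m (t + 1) ω (Finset.mem_Icc.mp hm).1 (by omega)).1
    · rw [qp.X_stay (t + 1) ω k (by omega) hk hmove, Nat.add_sub_cancel]
      have := ih (k + 1)
      push_cast at this
      linarith [Q.cm_pos]

lemma bddAbove_setOf_X_le (qp : QueueProcess Q Ω) (ω : Ω) (t : ℕ) (x : ℝ) :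
    BddAbove {k | qp.X k t ω ≤ x} :=
  ⟨⌊x / Q.cm⌋₊, fun k hk => Nat.le_floor <|
    (le_div_iff₀ Q.cm_pos).mpr ((qp.natCast_mul_cm_le_X ω t k).trans hk)⟩

lemma X_eq_X_succ_of_W_eq (qp : QueueProcess Q Ω) {t : ℕ} (ht : 1 ≤ t) {ω : Ω} {w : ℕ}
    (hw : qp.W t ω = w) {i : ℕ} (hi : w ≤ i) : qp.X i t ω = qp.X (i + 1) (t - 1) ω := by
  obtain ⟨hw1, hblock⟩ := ENat.mem_of_biInf_natCast_eq hw
  refine qp.X_stay t ω i ht (hw1.trans hi) fun hmove => ?_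
  have := hmove w (Finset.mem_Icc.mpr ⟨hw1, hi⟩)
  linarith

end QueueProcess

theorem counting_functions_coalesce (Q : QueueParams) {Ω : Type} [MeasurableSpace Ω]
    (qp : QueueProcess Q Ω) (t : ℕ) (ht : 1 ≤ t) (ω : Ω) (w : ℕ)
    (hw : qp.W t ω = (w : ℕ∞)) (x : ℝ) (hx : qp.X w t ω ≤ x) :
    qp.G t x ω = qp.G (t - 1) x ω := by
  have hcount : sSup {k | qp.X k (t - 1) ω ≤ x} = sSup {k | qp.X k t ω ≤ x} + 1 :=
    Nat.sSup_setOf_eq_sSup_setOf_shift_add_one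
      (fun i hi => by rw [qp.X_eq_X_succ_of_W_eq ht hw hi]) hx
      (qp.bddAbove_setOf_X_le ω (t - 1) x)
  simp only [QueueProcess.G, hcount, Nat.cast_sub ht]
  push_cast
  ring
end
end
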